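/- With μ_A(η, w_A, w_B) = [w_A − (1−η)(w_A + w_B − 2 w_A w_B)] / [η w_A + (1−η) w_B] · θ*, θ* > 0, η ∈ (0,1), w_A, w_B ∈ (0,1), we have ∂μ_A/∂w_B = −2(1−w_A) w_A (1−η) η θ* / (η w_A + (1−η) w_B)² < 0. -/

import Mathlib

/-! As a function of `w_B`, `μ_A / θ*` is the linear fractional map
`(η w_A + (1 - η)(2 w_A - 1) x) / (η w_A + (1 - η) x)`, and the derivative of `(a + b x)/(c + d x)`
is `(b c - a d)/(c + d x)²`; here `b c - a d = -2 (1 - w_A) w_A (1 - η) η < 0`. -/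

theorem hasDerivAt_affine_div_affine {𝕜 : Type*} [NontriviallyNormedField 𝕜] (a b c d x : 𝕜)
    (h : c + d * x ≠ 0) :
    HasDerivAt (fun y => (a + b * y) / (c + d * y)) ((b * c - a * d) / (c + d * x) ^ 2) x := by
  have hnum : HasDerivAt (fun y => a + b * y) b x := by
    simpa using ((hasDerivAt_id x).const_mul b).const_add a
  have hden : HasDerivAt (fun y => c + d * y) d x := by
    simpa using ((hasDerivAt_id x).const_mul d).const_add c
  exact (hnum.div hden h).congr_deriv (by ring)

/-- The long-run opinion of group A is decreasing in the weight the other group gives to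
the signal: `∂μ_A/∂w_B = −2(1-w_A) w_A (1-η) η θ* / (η w_A + (1-η) w_B)² < 0`. -/
theorem dmuA_dwB
    (η wA wB θ : ℝ) (hθ : 0 < θ) (hη : η ∈ Set.Ioo (0 : ℝ) 1)
    (hwA : wA ∈ Set.Ioo (0 : ℝ) 1) (hwB : wB ∈ Set.Ioo (0 : ℝ) 1) :
    HasDerivAt (fun x : ℝ =>
        (wA - (1 - η) * (wA + x - 2 * wA * x)) / (η * wA + (1 - η) * x) * θ)
      (-(2 * (1 - wA) * wA * (1 - η) * η * θ / (η * wA + (1 - η) * wB) ^ 2)) wB ∧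
    -(2 * (1 - wA) * wA * (1 - η) * η * θ / (η * wA + (1 - η) * wB) ^ 2) < 0 := by
  obtain ⟨hη0, hη1⟩ := hη
  obtain ⟨hA0, hA1⟩ := hwA
  have h1η : 0 < 1 - η := sub_pos.2 hη1
  have h1A : 0 < 1 - wA := sub_pos.2 hA1
  have hden : 0 < η * wA + (1 - η) * wB := by have := hwB.1; positivity
  refine ⟨?_, neg_neg_of_pos (div_pos (by positivity) (pow_pos hden 2))⟩
  have hnum (x : ℝ) :
      wA - (1 - η) * (wA + x - 2 * wA * x) = η * wA + (1 - η) * (2 * wA - 1) * x := by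
    ring
  simp only [hnum]
  exact ((hasDerivAt_affine_div_affine _ _ _ _ wB hden.ne').mul_const θ).congr_deriv (by ring)
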